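/- In the Lorentzian warped product g = -dt² + w²ḡ on ℝ × N with k = ∂_t + k̄/w and T = ∇t = -∂_t, the twist function of k with respect to g satisfies ι = ῑ/w, where ῑ is the twist function of k̄ in (N, ḡ), computed in the frames x = x̄/w, y = ȳ/w for an orthonormal frame x̄, ȳ of k̄^⊥ in N. -/

import Mathlib

/-!
Since `w` depends only on `t`, the factor `1 / w` is constant along the lifts `x̄, ȳ`, so
`[x̄/w, ȳ/w] = w⁻² [x̄, ȳ]` (the Leibniz terms of the bracket drop out). The lift of `[x̄, ȳ]`
is orthogonal to `∂_t`, and the warped metric pairs it with `k̄` to `w² ῑ`, so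
`ι = w⁻¹ · w⁻² · w² ῑ = ῑ / w`.
-/

/-- Abstract data of a semi-Riemannian manifold `M`: a module `V` of vector
fields over the ring of smooth functions `M → ℝ`, a metric `g`, a Lie bracket,
a Levi-Civita connection `conn` and directional derivative `D`, satisfying the
usual axioms (bilinearity, Leibniz rule, metric compatibility,
torsion-freeness, and the bracket identity for derivatives). -/
structure CovariantData (M : Type*) (V : Type*) [AddCommGroup V]
    [Module (M → ℝ) V] where
  g : V → V → M → ℝ
  bracket : V → V → V
  conn : V → V → V
  D : V → (M → ℝ) → M → ℝ
  g_symm : ∀ X Y, g X Y = g Y X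
  g_addLeft : ∀ X Y Z, g (X + Y) Z = g X Z + g Y Z
  g_smulLeft : ∀ (f : M → ℝ) (X Y : V), g (f • X) Y = f * g X Y
  conn_addLeft : ∀ X Y Z, conn (X + Y) Z = conn X Z + conn Y Z
  conn_addRight : ∀ X Y Z, conn X (Y + Z) = conn X Y + conn X Z
  conn_smulLeft : ∀ (f : M → ℝ) (X Y : V), conn (f • X) Y = f • conn X Y
  leibniz : ∀ (X : V) (f : M → ℝ) (Y : V),
    conn X (f • Y) = (D X f) • Y + f • conn X Y
  D_add : ∀ (X : V) (f h : M → ℝ), D X (f + h) = D X f + D X h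
  D_const : ∀ (X : V) (c : ℝ), D X (fun _ => c) = 0
  compat : ∀ X Y Z, D X (g Y Z) = g (conn X Y) Z + g Y (conn X Z)
  torsion_free : ∀ X Y, conn X Y - conn Y X = bracket X Y
  D_bracket : ∀ X Y f, D X (D Y f) - D Y (D X f) = D (bracket X Y) f

namespace CovariantData

variable {M V : Type*} [AddCommGroup V] [Module (M → ℝ) V] (d : CovariantData M V)

theorem g_smulRight (f : M → ℝ) (X Y : V) : d.g X (f • Y) = f * d.g X Y := by
  rw [d.g_symm, d.g_smulLeft, d.g_symm]

theorem bracket_smul_smul (f h : M → ℝ) (X Y : V) :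
    d.bracket (f • X) (h • Y)
      = (f * h) • d.bracket X Y + (f * d.D X h) • Y - (h * d.D Y f) • X := by
  rw [← d.torsion_free, ← d.torsion_free, d.conn_smulLeft, d.conn_smulLeft, d.leibniz,
    d.leibniz, smul_sub, smul_add, smul_add, smul_smul, smul_smul, smul_smul, smul_smul,
    mul_comm h f]
  abel

end CovariantData

theorem stmt12_general {N V : Type*} [AddCommGroup V] [Module (ℝ × N → ℝ) V]
    (d : CovariantData (ℝ × N) V) (et kbar xbar ybar brxy : V)
    (w : ℝ → ℝ) (iotabar : N → ℝ)
    -- brackets of fiber lifts are lifts of the fiber bracket: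
    (hbr : d.bracket xbar ybar = brxy)
    -- the warped metric on the relevant pairs (`ḡ(k̄,[x̄,ȳ]) = ῑ`):
    (hkbr : d.g kbar brxy = fun p => (w p.1) ^ 2 * iotabar p.2)
    (htbr : d.g et brxy = 0)
    -- `w` depends only on `t`, lifts are vertical:
    (hDx : d.D xbar (fun p : ℝ × N => 1 / w p.1) = 0)
    (hDy : d.D ybar (fun p : ℝ × N => 1 / w p.1) = 0) :
    ∀ p : ℝ × N,
      d.g (et + (fun q : ℝ × N => 1 / w q.1) • kbar)
        (d.bracket ((fun q : ℝ × N => 1 / w q.1) • xbar)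
          ((fun q : ℝ × N => 1 / w q.1) • ybar)) p
        = iotabar p.2 / w p.1 := by
  intro p
  rw [d.bracket_smul_smul, hDx, hDy, hbr]
  simp only [mul_zero, zero_smul, add_zero, sub_zero]
  rw [d.g_addLeft, d.g_smulLeft, d.g_smulRight, d.g_smulRight, htbr, hkbr]
  simp only [Pi.add_apply, Pi.mul_apply, Pi.zero_apply, mul_zero, zero_add]
  -- both sides vanish where `w = 0`, by the convention `x / 0 = 0`
  rcases eq_or_ne (w p.1) 0 with hw | hw
  · simp [hw]
  · field_simp

/-- In the Lorentzian warped product `g = -dt² + w²ḡ` on `ℝ × N`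
with `k = ∂t + k̄/w`, the twist function of `k`, computed in the frame
`x = x̄/w, y = ȳ/w` (lifts of an orthonormal frame `x̄, ȳ` of `k̄^⊥` in `N`),
satisfies `ι = g(k,[x,y]) = ῑ/w`, where `ῑ = ḡ(k̄,[x̄,ȳ])` is the twist
function of `k̄` in `(N,ḡ)`. Here `brxy` denotes the lift of `[x̄,ȳ]`. -/
theorem stmt12 {N V : Type*} [AddCommGroup V] [Module (ℝ × N → ℝ) V]
    (d : CovariantData (ℝ × N) V) (et kbar xbar ybar brxy : V)
    (w : ℝ → ℝ) (iotabar : N → ℝ)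
    (hw : ∀ t : ℝ, 0 < w t)
    -- brackets of fiber lifts are lifts of the fiber bracket:
    (hbr : d.bracket xbar ybar = brxy)
    -- the warped metric on the relevant pairs (`ḡ(k̄,[x̄,ȳ]) = ῑ`):
    (hkbr : d.g kbar brxy = fun p => (w p.1) ^ 2 * iotabar p.2)
    (htbr : d.g et brxy = 0)
    -- `w` depends only on `t`, lifts are vertical:
    (hDx : d.D xbar (fun p : ℝ × N => 1 / w p.1) = 0)
    (hDy : d.D ybar (fun p : ℝ × N => 1 / w p.1) = 0) :
    ∀ p : ℝ × N,
      d.g (et + (fun q : ℝ × N => 1 / w q.1) • kbar)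
        (d.bracket ((fun q : ℝ × N => 1 / w q.1) • xbar)
          ((fun q : ℝ × N => 1 / w q.1) • ybar)) p
        = iotabar p.2 / w p.1 :=
  stmt12_general d et kbar xbar ybar brxy w iotabar hbr hkbr htbr hDx hDy
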